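/- Fix an integer N ≥ 2, L > 0, a := 1/N. Let x : [0,T) → ℝ^ℤ be any C¹ solution of the step-flow ODE system with x_i(0) < x_{i+1}(0) and x_{i+N}(0) = x_i(0) + L. Then there is a constant c > 0, depending only on N, L, and the initial energy E^N(x(0)), such that for every t ∈ [0,T), the minimal terrace width satisfies ℓ_min(t) := min_i ( x_{i+1}(t) − x_i(t) ) ≥ c. -/

import Mathlib

open Real Filter Topology

/-- The chemical potential `f_i` of a (periodic) step configuration `c : ℤ → ℝ`
(with `c (i+N) = c i + L`), `a := 1/N`; the lattice sum is over the period window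
`j ∈ {i+1, …, i+N−1}`, which by `π`-periodicity of `cot` agrees with `Σ_{j=1,j≠i}^N`. -/
noncomputable def fchem (N : ℕ) (L : ℝ) (c : ℤ → ℝ) (i : ℤ) : ℝ :=
  -(2 * π * (N:ℝ)⁻¹ / L ^ 2) *
      (∑ j ∈ Finset.Ico (i + 1) (i + (N:ℤ)), Real.cot (π * (c j - c i) / L))
    + (1 / (c (i + 1) - c i) - 1 / (c i - c (i - 1)))
    + ((N:ℝ)⁻¹ ^ 2 / (c (i + 1) - c i) ^ 3 - (N:ℝ)⁻¹ ^ 2 / (c i - c (i - 1)) ^ 3)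

/-- The right-hand side of the step-flow ODE system, `a = 1/N`. -/
noncomputable def Fvel (N : ℕ) (L : ℝ) (c : ℤ → ℝ) (i : ℤ) : ℝ :=
  (N:ℝ) * ((fchem N L c (i + 1) - fchem N L c i) / (c (i + 1) - c i)
    - (fchem N L c i - fchem N L c (i - 1)) / (c i - c (i - 1)))

/-- The discrete energy
`E^N(c) = a²·Σ_{1≤i<j≤N}(2/L)·ln|sin(π(c_j−c_i)/L)|
        + a·Σ_{i=1}^N(−ln((c_{i+1}−c_i)/a) + (a²/2)/(c_{i+1}−c_i)²)`, `a = 1/N`,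
with the convention `c_{N+1} = c_1 + L` (automatic for periodic configurations). -/
noncomputable def energyN (N : ℕ) (L : ℝ) (c : ℤ → ℝ) : ℝ :=
  (N:ℝ)⁻¹ ^ 2 * ∑ i ∈ Finset.Icc (1:ℤ) (N:ℤ), ∑ j ∈ Finset.Ioc i (N:ℤ),
      (2 / L) * Real.log |Real.sin (π * (c j - c i) / L)|
    + (N:ℝ)⁻¹ * ∑ i ∈ Finset.Icc (1:ℤ) (N:ℤ),
      (-Real.log ((c (i + 1) - c i) * (N:ℝ)) + ((N:ℝ)⁻¹ ^ 2 / 2) / (c (i + 1) - c i) ^ 2)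

/-!
The energy `E^N` is a Lyapunov function of the step flow. Its derivative in a periodic direction
`v` is `a · Σ f_i v_i`: the terrace terms give this after a summation by parts over one period,
the interaction terms after pairing `i < j` using the antisymmetry and `π`-periodicity of `cot`.
For `v` the step-flow velocity a second summation by parts turns this into
`-Σ (f_{i+1} - f_i)² / (x_{i+1} - x_i) ≤ 0`, so `E^N(x(t)) ≤ E^N(x(0))`.

Conversely `E^N` is coercive in the minimal terrace width `ℓ`: by Jordan's inequality every
`|sin (π (x_j - x_i) / L)|` is at least `2ℓ / L`, whence
`E^N ≥ (2/L) log (2ℓ/L) - log (L N) + a³ / (2ℓ²)`, and the `a³/ℓ²` term wins as `ℓ → 0`.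
-/

open Finset Function

namespace Real

lemma cot_add_pi (x : ℝ) : cot (x + π) = cot x := by
  simp [cot_eq_cos_div_sin, cos_add, sin_add, neg_div_neg_eq]

lemma cot_neg (x : ℝ) : cot (-x) = -cot x := by
  simp [cot_eq_cos_div_sin, div_neg]

end Real

section IntervalSums
variable {M : Type*} [AddCommGroup M]

lemma sum_Icc_one_sub_telescope (F : ℤ → M) (n : ℕ) :
    ∑ i ∈ Icc (1 : ℤ) n, (F (i + 1) - F i) = F (n + 1) - F 1 := by
  induction n with
  | zero => simp
  | succ m ih =>
    rw [Nat.cast_succ, ← Ico_insert_right (by omega), Ico_add_one_right_eq_Icc,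
      sum_insert (by simp), ih]
    abel

lemma Function.Periodic.sum_Icc_one_add_one {F : ℤ → M} {n : ℕ} (hF : Periodic F n) :
    ∑ i ∈ Icc (1 : ℤ) n, F (i + 1) = ∑ i ∈ Icc (1 : ℤ) n, F i := by
  rw [← sub_eq_zero, ← sum_sub_distrib, sum_Icc_one_sub_telescope, add_comm, hF, sub_self]

lemma sum_Icc_mul_sub_of_periodic {R : Type*} [CommRing R] {u v : ℤ → R} {n : ℕ}
    (hu : Periodic u n) (hv : Periodic v n) :
    ∑ i ∈ Icc (1 : ℤ) n, u i * (v (i + 1) - v i) = ∑ i ∈ Icc (1 : ℤ) n, (u (i - 1) - u i) * v i := by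
  have hshift := ((hu.sub_const 1).mul hv).sum_Icc_one_add_one
  simp only [Pi.mul_apply, add_sub_cancel_right] at hshift
  simp only [mul_sub, sub_mul, sum_sub_distrib, hshift]

lemma sum_Ioc_mul_sub_of_antisymm {R : Type*} [CommRing R] {K : ℤ → ℤ → R}
    (hK : ∀ i j, K j i = -K i j) (v : ℤ → R) (n : ℤ) :
    ∑ i ∈ Icc 1 n, ∑ j ∈ Ioc i n, K i j * (v j - v i)
      = -∑ i ∈ Icc 1 n, v i * (∑ j ∈ Ioc i n, K i j + ∑ j ∈ Ico 1 i, K i j) := by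
  have hswap : ∑ i ∈ Icc 1 n, ∑ j ∈ Ioc i n, K i j * v j
      = -∑ j ∈ Icc 1 n, v j * ∑ i ∈ Ico 1 j, K j i := by
    rw [sum_comm' (s' := fun j => Ico 1 j) (t' := Icc 1 n)
      fun i j => by simp only [mem_Icc, mem_Ioc, mem_Ico]; omega]
    rw [← sum_neg_distrib]
    refine sum_congr rfl fun j _ => ?_
    rw [mul_sum, ← sum_neg_distrib]
    exact sum_congr rfl fun i _ => by rw [hK j i]; ring
  simp only [mul_sub, sum_sub_distrib, hswap]
  simp only [mul_add, sum_add_distrib, mul_sum, mul_comm (K _ _)]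
  abel

end IntervalSums

section StepConfiguration
variable {N : ℕ} {L : ℝ} {c : ℤ → ℝ}

lemma periodic_gap (hper : ∀ i, c (i + N) = c i + L) : Periodic (fun i => c (i + 1) - c i) N :=
  fun i => show c (i + N + 1) - c (i + N) = c (i + 1) - c i by
    rw [add_right_comm, hper, hper]; ring

lemma sum_Icc_gap (hper : ∀ i, c (i + N) = c i + L) :
    ∑ i ∈ Icc (1 : ℤ) N, (c (i + 1) - c i) = L := by
  rw [sum_Icc_one_sub_telescope, add_comm, hper]
  ring

lemma periodic_fchem (hper : ∀ i, c (i + N) = c i + L) : Periodic (fchem N L c) N := by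
  intro i
  have hwindow : ∑ j ∈ Ico (i + N + 1) (i + N + N), cot (π * (c j - c (i + N)) / L)
      = ∑ j ∈ Ico (i + 1) (i + N), cot (π * (c j - c i) / L) := by
    rw [add_right_comm i, ← sum_Ico_add']
    exact sum_congr rfl fun j _ => by rw [hper, hper]; ring_nf
  rw [fchem, fchem, hwindow, add_right_comm i, add_sub_right_comm i, hper, hper, hper]
  ring

lemma periodic_Fvel (hper : ∀ i, c (i + N) = c i + L) : Periodic (Fvel N L c) N := by
  intro i
  have hf := periodic_fchem hper
  rw [Fvel, Fvel, add_right_comm i, add_sub_right_comm i, hf, hf, hf, hper, hper, hper]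
  ring

lemma sum_Ico_cot_eq (hper : ∀ i, c (i + N) = c i + L) (hL : L ≠ 0) {i : ℤ}
    (hi : i ∈ Icc (1 : ℤ) N) :
    ∑ j ∈ Ico (i + 1) (i + N), cot (π * (c j - c i) / L)
      = ∑ j ∈ Ioc i N, cot (π * (c j - c i) / L) + ∑ j ∈ Ico 1 i, cot (π * (c j - c i) / L) := by
  rw [mem_Icc] at hi
  rw [← Ico_union_Ico_eq_Ico (a := i + 1) (b := N + 1) (c := i + N) (by omega) (by omega),
    sum_union (Ico_disjoint_Ico_consecutive _ _ _), Ico_add_one_add_one_eq_Ioc, add_comm (N : ℤ) 1,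
    ← sum_Ico_add']
  congr 1
  refine sum_congr rfl fun j _ => ?_
  rw [hper, show π * (c j + L - c i) / L = π * (c j - c i) / L + π by field_simp; ring,
    Real.cot_add_pi]

end StepConfiguration

section EnergyDissipation
variable {N : ℕ} {L : ℝ} {c : ℤ → ℝ}

noncomputable def energyNDeriv (N : ℕ) (L : ℝ) (c v : ℤ → ℝ) : ℝ :=
  (N:ℝ)⁻¹ ^ 2 * ∑ i ∈ Icc (1:ℤ) N, ∑ j ∈ Ioc i N,
      (2 / L) * (π / L * cot (π * (c j - c i) / L) * (v j - v i))
    + (N:ℝ)⁻¹ * ∑ i ∈ Icc (1:ℤ) N,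
      (-((v (i + 1) - v i) / (c (i + 1) - c i))
        - (N:ℝ)⁻¹ ^ 2 * ((v (i + 1) - v i) / (c (i + 1) - c i) ^ 3))

lemma sin_pi_mul_sub_div_pos (hL : 0 < L) (hc : StrictMono c)
    (hper : ∀ i, c (i + N) = c i + L) {i j : ℤ} (hij : i < j) (hji : j < i + N) :
    0 < sin (π * (c j - c i) / L) := by
  have hlt : c j - c i < L := by linarith [hc hji, hper i]
  apply sin_pos_of_pos_of_lt_pi
  · have := sub_pos.2 (hc hij); positivity
  · rw [mul_div_assoc]
    exact mul_lt_of_lt_one_right pi_pos ((div_lt_one hL).2 hlt)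

lemma hasDerivWithinAt_energyN_comp {x : ℝ → ℤ → ℝ} {v : ℤ → ℝ} {s : Set ℝ} {t : ℝ}
    (hN : N ≠ 0) (hL : 0 < L) (hm : ∀ i, x t i < x t (i + 1))
    (hper : ∀ i, x t (i + N) = x t i + L)
    (hv : ∀ i, HasDerivWithinAt (fun u => x u i) (v i) s t) :
    HasDerivWithinAt (fun u => energyN N L (x u)) (energyNDeriv N L (x t) v) s t := by
  have hpair : ∀ i ∈ Icc (1:ℤ) N, ∀ j ∈ Ioc i N,
      HasDerivWithinAt (fun u => (2 / L) * log |sin (π * (x u j - x u i) / L)|)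
        ((2 / L) * (π / L * cot (π * (x t j - x t i) / L) * (v j - v i))) s t := by
    intro i hi j hj
    rw [mem_Icc] at hi
    rw [mem_Ioc] at hj
    have hsin := sin_pi_mul_sub_div_pos hL (strictMono_int_of_lt_succ hm) hper hj.1 (by omega)
    have harg := (((hv j).sub (hv i)).const_mul π).div_const L
    simp only [log_abs]
    refine ((harg.sin.log hsin.ne').const_mul (2 / L)).congr_deriv ?_
    simp only [Pi.sub_apply, cot_eq_cos_div_sin]
    field_simp
  have hgap : ∀ i ∈ Icc (1:ℤ) N,
      HasDerivWithinAt
        (fun u => -log ((x u (i + 1) - x u i) * N) + ((N:ℝ)⁻¹ ^ 2 / 2) / (x u (i + 1) - x u i) ^ 2)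
        (-((v (i + 1) - v i) / (x t (i + 1) - x t i))
          - (N:ℝ)⁻¹ ^ 2 * ((v (i + 1) - v i) / (x t (i + 1) - x t i) ^ 3)) s t := by
    intro i _
    have hg := (hv (i + 1)).sub (hv i)
    have hgne : x t (i + 1) - x t i ≠ 0 := (sub_pos.2 (hm i)).ne'
    have hNne : (N:ℝ) ≠ 0 := Nat.cast_ne_zero.2 hN
    refine (((hg.mul_const (N:ℝ)).log (mul_ne_zero hgne hNne)).neg.add
      ((hasDerivWithinAt_const t s _).div (hg.pow 2) (pow_ne_zero 2 hgne))).congr_deriv ?_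
    simp only [Pi.sub_apply, Pi.pow_apply]
    field_simp
    ring
  exact ((HasDerivWithinAt.fun_sum fun i hi => HasDerivWithinAt.fun_sum (hpair i hi)).const_mul _).add
    ((HasDerivWithinAt.fun_sum hgap).const_mul _)

lemma energyNDeriv_eq_sum_fchem_mul (hL : L ≠ 0) (hper : ∀ i, c (i + N) = c i + L)
    {v : ℤ → ℝ} (hv : Periodic v N) :
    energyNDeriv N L c v = (N:ℝ)⁻¹ * ∑ i ∈ Icc (1:ℤ) N, fchem N L c i * v i := by
  set a : ℝ := (N:ℝ)⁻¹
  set h : ℤ → ℝ := fun i => -(1 / (c (i + 1) - c i)) - a ^ 2 / (c (i + 1) - c i) ^ 3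
  have hpair : ∑ i ∈ Icc (1:ℤ) N, ∑ j ∈ Ioc i N,
        (2 / L) * (π / L * cot (π * (c j - c i) / L) * (v j - v i))
      = -(2 * π / L ^ 2) * ∑ i ∈ Icc (1:ℤ) N,
          v i * ∑ j ∈ Ico (i + 1) (i + N), cot (π * (c j - c i) / L) := by
    have hK : ∀ i j : ℤ, cot (π * (c i - c j) / L) = -cot (π * (c j - c i) / L) := fun i j => by
      rw [← Real.cot_neg]; ring_nf
    calc _ = (2 * π / L ^ 2) * ∑ i ∈ Icc (1:ℤ) N, ∑ j ∈ Ioc i N,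
          cot (π * (c j - c i) / L) * (v j - v i) := by
          simp only [mul_sum]
          exact sum_congr rfl fun i _ => sum_congr rfl fun j _ => by ring
      _ = _ := by
          rw [sum_Ioc_mul_sub_of_antisymm hK v, mul_neg, ← neg_mul]
          exact congrArg _ (sum_congr rfl fun i hi => by rw [sum_Ico_cot_eq hper hL hi])
  have hterrace : ∑ i ∈ Icc (1:ℤ) N,
        (-((v (i + 1) - v i) / (c (i + 1) - c i)) - a ^ 2 * ((v (i + 1) - v i) / (c (i + 1) - c i) ^ 3))
      = ∑ i ∈ Icc (1:ℤ) N, (h (i - 1) - h i) * v i := by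
    have hh : Periodic h N := (periodic_gap hper).comp fun g => -(1 / g) - a ^ 2 / g ^ 3
    rw [← sum_Icc_mul_sub_of_periodic hh hv]
    exact sum_congr rfl fun i _ => by simp only [h]; ring
  rw [energyNDeriv, hpair, hterrace, mul_sum, mul_sum, mul_sum, mul_sum, ← sum_add_distrib]
  refine sum_congr rfl fun i _ => ?_
  simp only [fchem, h, sub_add_cancel]
  ring

lemma energyNDeriv_Fvel (hN : N ≠ 0) (hL : L ≠ 0) (hper : ∀ i, c (i + N) = c i + L) :
    energyNDeriv N L c (Fvel N L c)
      = -∑ i ∈ Icc (1:ℤ) N, (fchem N L c (i + 1) - fchem N L c i) ^ 2 / (c (i + 1) - c i) := by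
  set f := fchem N L c
  set w : ℤ → ℝ := fun i => (f (i + 1) - f i) / (c (i + 1) - c i)
  have hf : Periodic f N := periodic_fchem hper
  have hw : Periodic w N := ((hf.add_const 1).sub hf).div (periodic_gap hper)
  have hFvel : ∀ i, Fvel N L c i = N * (w i - w (i - 1)) := fun i => by
    simp only [Fvel, w, sub_add_cancel]
    rfl
  have hNne : (N:ℝ) ≠ 0 := Nat.cast_ne_zero.2 hN
  rw [energyNDeriv_eq_sum_fchem_mul hL hper (periodic_Fvel hper), mul_sum]
  calc ∑ i ∈ Icc (1:ℤ) N, (N:ℝ)⁻¹ * (f i * Fvel N L c i)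
      = -∑ i ∈ Icc (1:ℤ) N, (w (i - 1) - w i) * f i := by
        rw [← sum_neg_distrib]
        exact sum_congr rfl fun i _ => by rw [hFvel]; field_simp; ring
    _ = _ := by
        rw [← sum_Icc_mul_sub_of_periodic hw hf]
        exact congrArg _ (sum_congr rfl fun i _ => by simp only [w]; ring)

lemma energyNDeriv_Fvel_nonpos (hN : N ≠ 0) (hL : L ≠ 0) (hm : ∀ i, c i < c (i + 1))
    (hper : ∀ i, c (i + N) = c i + L) : energyNDeriv N L c (Fvel N L c) ≤ 0 := by
  rw [energyNDeriv_Fvel hN hL hper, neg_nonpos]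
  exact sum_nonneg fun i _ => div_nonneg (sq_nonneg _) (sub_pos.2 (hm i)).le

lemma antitoneOn_energyN_of_stepFlow {T : ℝ} {x : ℝ → ℤ → ℝ} (hN : N ≠ 0) (hL : 0 < L)
    (hper : ∀ t ∈ Set.Ico (0:ℝ) T, ∀ i : ℤ, x t (i + N) = x t i + L)
    (hm : ∀ t ∈ Set.Ico (0:ℝ) T, ∀ i : ℤ, x t i < x t (i + 1))
    (hflow : ∀ i : ℤ, ∀ t ∈ Set.Ico (0:ℝ) T,
      HasDerivWithinAt (fun s => x s i) (Fvel N L (x t) i) (Set.Ico 0 T) t) :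
    AntitoneOn (fun t => energyN N L (x t)) (Set.Ico 0 T) := by
  have hderiv : ∀ t ∈ Set.Ico (0:ℝ) T, HasDerivWithinAt (fun t => energyN N L (x t))
      (energyNDeriv N L (x t) (Fvel N L (x t))) (Set.Ico 0 T) t := fun t ht =>
    hasDerivWithinAt_energyN_comp hN hL (hm t ht) (hper t ht) fun i => hflow i t ht
  refine antitoneOn_of_hasDerivWithinAt_nonpos (convex_Ico 0 T)
    (fun t ht => (hderiv t ht).continuousWithinAt)
    (fun t ht => (hderiv t (interior_subset ht)).mono interior_subset) fun t ht => ?_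
  have ht' := interior_subset ht
  exact energyNDeriv_Fvel_nonpos hN hL.ne' (hm t ht') (hper t ht')

end EnergyDissipation

lemma two_mul_div_le_sin_pi_mul_div {L ℓ d : ℝ} (hL : 0 < L) (hℓ : 0 ≤ ℓ) (hℓd : ℓ ≤ d)
    (hℓd' : ℓ ≤ L - d) : 2 * ℓ / L ≤ sin (π * d / L) := by
  wlog hd : d ≤ L / 2 generalizing d
  · have := this (d := L - d) hℓd' (by linarith) (by linarith)
    rwa [show π * (L - d) / L = π - π * d / L by field_simp, sin_pi_sub] at this
  have hx₀ : 0 ≤ π * d / L := by have : 0 ≤ d := hℓ.trans hℓd; positivity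
  have hx₁ : π * d / L ≤ π / 2 := by
    rw [div_le_div_iff₀ hL two_pos]; nlinarith [pi_pos]
  calc 2 * ℓ / L ≤ 2 / π * (π * d / L) := by
        rw [show 2 / π * (π * d / L) = 2 * d / L by field_simp]; gcongr
    _ ≤ sin (π * d / L) := mul_le_sin hx₀ hx₁

noncomputable def energyFloor (N : ℕ) (L : ℝ) : ℝ := 2 / L - log (L * N) - N ^ 3

noncomputable def gapBound (N : ℕ) (L E₀ : ℝ) : ℝ :=
  √((N:ℝ)⁻¹ ^ 3 / (4 * max 1 (E₀ - energyFloor N L)))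

section Coercivity
variable {N : ℕ} {L : ℝ} {c : ℤ → ℝ}

lemma exists_mem_Icc_forall_gap_le (hN : N ≠ 0) (hper : ∀ i, c (i + N) = c i + L) :
    ∃ i₀ ∈ Icc (1:ℤ) N, ∀ i, c (i₀ + 1) - c i₀ ≤ c (i + 1) - c i := by
  obtain ⟨i₀, hi₀, hmin⟩ := exists_min_image (Icc (1:ℤ) N) (fun i => c (i + 1) - c i)
    ⟨1, by simp only [mem_Icc]; omega⟩
  refine ⟨i₀, hi₀, fun i => ?_⟩
  obtain ⟨j, hj, hij⟩ := (periodic_gap hper).exists_mem_Ico (by omega) i 1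
  rw [hij]
  exact hmin j (by simp only [Set.mem_Ico] at hj; simp only [mem_Icc]; omega)

lemma energyN_interaction_ge (hN : N ≠ 0) (hL : 0 < L) (hm : ∀ i, c i < c (i + 1))
    (hper : ∀ i, c (i + N) = c i + L) {ℓ : ℝ} (hℓ : 0 < ℓ) (hℓL : 2 * ℓ ≤ L)
    (hgap : ∀ i, ℓ ≤ c (i + 1) - c i) :
    (2 / L) * log (2 * ℓ / L) ≤ (N:ℝ)⁻¹ ^ 2 * ∑ i ∈ Icc (1:ℤ) N, ∑ j ∈ Ioc i N,
      (2 / L) * log |sin (π * (c j - c i) / L)| := by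
  set β := (2 / L) * log (2 * ℓ / L)
  have hc := strictMono_int_of_lt_succ hm
  have hβ : β ≤ 0 :=
    mul_nonpos_of_nonneg_of_nonpos (by positivity) (log_nonpos (by positivity) (by
      rwa [div_le_one hL]))
  have hterm : ∀ i ∈ Icc (1:ℤ) N, ∀ j ∈ Ioc i N, β ≤ (2 / L) * log |sin (π * (c j - c i) / L)| := by
    intro i hi j hj
    rw [mem_Icc] at hi
    rw [mem_Ioc] at hj
    have hsin := two_mul_div_le_sin_pi_mul_div (d := c j - c i) hL hℓ.le
      (by linarith [hgap i, hc.monotone (show i + 1 ≤ j by omega)])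
      (by linarith [hgap j, hper i, hc.monotone (show j + 1 ≤ i + N by omega)])
    rw [abs_of_pos ((by positivity : 0 < 2 * ℓ / L).trans_le hsin)]
    exact mul_le_mul_of_nonneg_left (log_le_log (by positivity) hsin) (by positivity)
  have hrow : ∀ i ∈ Icc (1:ℤ) N, N * β ≤ ∑ j ∈ Ioc i N, (2 / L) * log |sin (π * (c j - c i) / L)| := by
    intro i hi
    have hcard : ((Ioc i N).card : ℝ) ≤ N := by
      rw [mem_Icc] at hi
      rw [Int.card_Ioc]
      exact_mod_cast (show ((N:ℤ) - i).toNat ≤ N by omega)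
    calc N * β ≤ (Ioc i N).card * β := mul_le_mul_of_nonpos_right hcard hβ
      _ ≤ _ := by rw [← nsmul_eq_mul]; exact card_nsmul_le_sum _ _ _ (hterm i hi)
  have hsum := card_nsmul_le_sum _ _ _ hrow
  rw [Int.card_Icc, nsmul_eq_mul] at hsum
  calc β = (N:ℝ)⁻¹ ^ 2 * (N * (N * β)) := by field_simp
    _ ≤ _ := by
      gcongr
      simpa using hsum

lemma energyN_terrace_ge (hN : N ≠ 0) (hm : ∀ i, c i < c (i + 1)) (hper : ∀ i, c (i + N) = c i + L)
    {i₀ : ℤ} (hi₀ : i₀ ∈ Icc (1:ℤ) N) :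
    -log (L * N) + (N:ℝ)⁻¹ ^ 3 / 2 / (c (i₀ + 1) - c i₀) ^ 2 ≤ (N:ℝ)⁻¹ * ∑ i ∈ Icc (1:ℤ) N,
      (-log ((c (i + 1) - c i) * N) + ((N:ℝ)⁻¹ ^ 2 / 2) / (c (i + 1) - c i) ^ 2) := by
  have hg : ∀ i, 0 < c (i + 1) - c i := fun i => sub_pos.2 (hm i)
  have hlog : ∀ i ∈ Icc (1:ℤ) N, -log (L * N) ≤ -log ((c (i + 1) - c i) * N) := by
    intro i hi
    have hgL : c (i + 1) - c i ≤ L := sum_Icc_gap hper ▸ single_le_sum (fun j _ => (hg j).le) hi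
    have := hg i
    gcongr
  have hsum := card_nsmul_le_sum _ _ _ hlog
  rw [Int.card_Icc, nsmul_eq_mul] at hsum
  have hquad := single_le_sum (f := fun i => ((N:ℝ)⁻¹ ^ 2 / 2) / (c (i + 1) - c i) ^ 2)
    (fun _ _ => by positivity) hi₀
  have hNne : (N:ℝ) ≠ 0 := Nat.cast_ne_zero.2 hN
  rw [sum_add_distrib]
  calc _ = (N:ℝ)⁻¹ * (N * -log (L * N) + ((N:ℝ)⁻¹ ^ 2 / 2) / (c (i₀ + 1) - c i₀) ^ 2) := by
        field_simp
    _ ≤ _ := mul_le_mul_of_nonneg_left (add_le_add (by simpa using hsum) hquad) (by positivity)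

lemma energyFloor_add_le_energyN (hN : 2 ≤ N) (hL : 0 < L) (hm : ∀ i, c i < c (i + 1))
    (hper : ∀ i, c (i + N) = c i + L) {i₀ : ℤ} (hi₀ : i₀ ∈ Icc (1:ℤ) N)
    (hmin : ∀ i, c (i₀ + 1) - c i₀ ≤ c (i + 1) - c i) :
    energyFloor N L + (N:ℝ)⁻¹ ^ 3 / (4 * (c (i₀ + 1) - c i₀) ^ 2) ≤ energyN N L c := by
  set ℓ := c (i₀ + 1) - c i₀ with hℓdef
  have hℓ : 0 < ℓ := sub_pos.2 (hm i₀)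
  have hNℓ : N * ℓ ≤ L := by
    have := card_nsmul_le_sum (Icc (1:ℤ) N) _ _ fun i _ => hmin i
    rwa [sum_Icc_gap hper, Int.card_Icc, nsmul_eq_mul, add_sub_cancel_right, Int.toNat_natCast]
      at this
  have hℓL : 2 * ℓ ≤ L := le_trans (by gcongr; exact_mod_cast hN) hNℓ
  have hlog : 2 / L - 1 / ℓ ≤ (2 / L) * log (2 * ℓ / L) := by
    rw [show 2 / L - 1 / ℓ = 2 / L * (1 - (2 * ℓ / L)⁻¹) by field_simp]
    exact mul_le_mul_of_nonneg_left (one_sub_inv_le_log_of_pos (by positivity)) (by positivity)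
  -- AM-GM between the `-1/ℓ` of the interaction and the `1/ℓ²` of the terraces
  have hamgm : 1 / ℓ ≤ (N:ℝ)⁻¹ ^ 3 / (4 * ℓ ^ 2) + N ^ 3 := by
    have hNpos : (0:ℝ) < N := by exact_mod_cast (by omega : 0 < N)
    have hsq : 0 ≤ (N:ℝ) ^ 3 * ((N:ℝ)⁻¹ ^ 3 / (2 * ℓ) - 1) ^ 2 := by positivity
    have hexp : (N:ℝ) ^ 3 * ((N:ℝ)⁻¹ ^ 3 / (2 * ℓ) - 1) ^ 2
        = (N:ℝ)⁻¹ ^ 3 / (4 * ℓ ^ 2) + N ^ 3 - 1 / ℓ := by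
      field_simp
      ring
    linarith
  have hint := energyN_interaction_ge (by omega) hL hm hper hℓ hℓL fun i => hmin i
  have hterr := energyN_terrace_ge (by omega) hm hper hi₀
  rw [← hℓdef] at hterr
  have hsplit : (N:ℝ)⁻¹ ^ 3 / 2 / ℓ ^ 2 = 2 * ((N:ℝ)⁻¹ ^ 3 / (4 * ℓ ^ 2)) := by field_simp; ring
  rw [energyN, energyFloor]
  linarith

lemma gapBound_pos (hN : N ≠ 0) (E₀ : ℝ) : 0 < gapBound N L E₀ :=
  sqrt_pos.2 (by positivity)

lemma gapBound_le_gap (hN : 2 ≤ N) (hL : 0 < L) (hm : ∀ i, c i < c (i + 1))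
    (hper : ∀ i, c (i + N) = c i + L) {E₀ : ℝ} (hE : energyN N L c ≤ E₀) (i : ℤ) :
    gapBound N L E₀ ≤ c (i + 1) - c i := by
  obtain ⟨i₀, hi₀, hmin⟩ := exists_mem_Icc_forall_gap_le (by omega) hper
  have hℓ : 0 < c (i₀ + 1) - c i₀ := sub_pos.2 (hm i₀)
  have hfloor := energyFloor_add_le_energyN hN hL hm hper hi₀ hmin
  have hK : (N:ℝ)⁻¹ ^ 3 / (4 * (c (i₀ + 1) - c i₀) ^ 2) ≤ max 1 (E₀ - energyFloor N L) := by
    linarith [le_max_right 1 (E₀ - energyFloor N L)]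
  refine ((sqrt_le_left hℓ.le).2 ?_).trans (hmin i)
  rw [div_le_iff₀ (by positivity)] at hK ⊢
  linarith

end Coercivity

/-- A lower bound for the minimal terrace width: there is `c > 0`,
depending only on `N`, `L` and the initial energy `E₀ = E^N(x(0))`, such that along any `C¹`
solution of the step-flow ODE system on `[0,T)` one has `x_{i+1}(t) − x_i(t) ≥ c` for all
`t ∈ [0,T)` and all `i`. -/
theorem stmt_8 (N : ℕ) (hN : 2 ≤ N) (L : ℝ) (hL : 0 < L) (E₀ : ℝ) :
    ∃ c : ℝ, 0 < c ∧
      ∀ (T : ℝ) (x : ℝ → ℤ → ℝ),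
        (∀ t ∈ Set.Ico (0:ℝ) T, ∀ i : ℤ, x t (i + (N:ℤ)) = x t i + L) →
        (∀ t ∈ Set.Ico (0:ℝ) T, ∀ i : ℤ, x t i < x t (i + 1)) →
        (∀ i : ℤ, ∀ t ∈ Set.Ico (0:ℝ) T,
          HasDerivWithinAt (fun s => x s i) (Fvel N L (x t) i) (Set.Ico 0 T) t) →
        energyN N L (x 0) = E₀ →
        ∀ t ∈ Set.Ico (0:ℝ) T, ∀ i : ℤ, c ≤ x t (i + 1) - x t i := by
  refine ⟨gapBound N L E₀, gapBound_pos (by omega) E₀, fun T x hper hm hflow hE₀ t ht => ?_⟩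
  have hanti := antitoneOn_energyN_of_stepFlow (by omega) hL hper hm hflow
  have hEt : energyN N L (x t) ≤ E₀ := hE₀ ▸ hanti ⟨le_rfl, ht.1.trans_lt ht.2⟩ ht ht.1
  exact gapBound_le_gap hN hL (hm t ht) (hper t ht) hEt
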